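/- Fix a natural number q₀. Then, as p → ∞, the ratio C(p, q₀) / ( (1/3)·√(2/(3π))·(1/q₀!)·(16/3)^{q₀} · p^{q₀ − 3/2} · (256/27)^p ) tends to 1; that is, C(p, q₀) is asymptotically equivalent to (1/3)·√(2/(3π))·(1/q₀!)·(16/3)^{q₀} · p^{q₀ − 3/2} · (4⁴/3³)^p. -/

import Mathlib

/-!
Stirling's formula applied to the three factorials of `(4p)! / (p! (3p)!)` gives
`√(2/(3πp)) (256/27)^p`. For fixed `k`, `(n + k)! ~ n! nᵏ`, so the shifts by `2q` and `q + 1`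
in `C(p, q)` contribute the polynomial factor `(4p)^{2q} / (q! (3p)^{q+1})`.
-/

open Filter Real

noncomputable def melonC (p q : ℕ) : ℝ :=
  (Nat.factorial (4 * p + 2 * q) : ℝ) /
    ((Nat.factorial p : ℝ) * (Nat.factorial q : ℝ) * (Nat.factorial (3 * p + q + 1) : ℝ))

open Asymptotics Nat

theorem natCast_add_isEquivalent (c : ℝ) :
    (fun n : ℕ => (n : ℝ) + c) ~[atTop] fun n => (n : ℝ) :=
  IsEquivalent.refl.add_const_of_norm_tendsto_atTop
    (tendsto_norm_atTop_atTop.comp tendsto_natCast_atTop_atTop)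

theorem factorial_add_isEquivalent (k : ℕ) :
    (fun n : ℕ => ((n + k)! : ℝ)) ~[atTop] fun n => (n ! : ℝ) * (n : ℝ) ^ k := by
  induction k with
  | zero => simpa using IsEquivalent.refl
  | succ k ih =>
    convert (natCast_add_isEquivalent (k + 1)).mul ih using 1 <;> ext n
    · rw [Pi.mul_apply, ← add_assoc, factorial_succ]; push_cast; ring
    · simp only [Pi.mul_apply]; ring

theorem factorial_mul_div_factorial_mul_factorial_isEquivalent {a b : ℕ} (ha : 0 < a)
    (hb : 0 < b) :
    (fun n : ℕ => (((a + b) * n)! / ((a * n)! * (b * n)!) : ℝ)) ~[atTop]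
      fun n => √((a + b) / (2 * π * a * b * n)) *
        ((a + b : ℝ) ^ (a + b) / (a ^ a * b ^ b)) ^ n := by
  have stirling {c : ℕ} (hc : 0 < c) := Stirling.factorial_isEquivalent_stirling.comp_tendsto
    (tendsto_id.const_mul_atTop' hc)
  refine ((stirling (add_pos ha hb)).div ((stirling ha).mul (stirling hb))).congr_right ?_
  filter_upwards [eventually_gt_atTop 0] with n hn
  have hn' : (0 : ℝ) < n := by exact_mod_cast hn
  have ha' : (0 : ℝ) < a := by exact_mod_cast ha
  have hb' : (0 : ℝ) < b := by exact_mod_cast hb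
  have hsqrt : √((a + b) / (2 * π * a * b * n)) =
      √(2 * ((a + b) * n) * π) / (√(2 * (a * n) * π) * √(2 * (b * n) * π)) := by
    rw [← sqrt_mul (by positivity), ← sqrt_div' _ (by positivity)]
    congr 1
    field_simp
  have hpow (c : ℕ) :
      ((c * n : ℕ) / exp 1 : ℝ) ^ (c * n) = ((c : ℝ) ^ c) ^ n * ((n / exp 1) ^ n) ^ c := by
    rw [← pow_mul, ← pow_mul, mul_comm n c, ← mul_pow]
    push_cast
    ring
  simp only [Function.comp, id_eq, Pi.div_apply, Pi.mul_apply]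
  rw [hpow (a + b), hpow a, hpow b, hsqrt]
  push_cast
  rw [pow_add (((n : ℝ) / exp 1) ^ n) a b, div_pow ((a + b : ℝ) ^ (a + b)), mul_pow]
  field_simp

theorem factorial_four_mul_div_isEquivalent :
    (fun n : ℕ => ((4 * n)! / (n ! * (3 * n)!) : ℝ)) ~[atTop]
      fun n => √(2 / (3 * π * n)) * (256 / 27 : ℝ) ^ n := by
  convert factorial_mul_div_factorial_mul_factorial_isEquivalent one_pos (three_pos (α := ℕ))
    using 3 with n n
  all_goals push_cast; ring_nf

theorem melonC_isEquivalent (q : ℕ) :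
    (fun p => melonC p q) ~[atTop] fun p : ℕ => (1 / 3) * √(2 / (3 * π)) * (1 / (q ! : ℝ)) *
      (16 / 3) ^ q * (p : ℝ) ^ ((q : ℝ) - 3 / 2) * (256 / 27 : ℝ) ^ p := by
  have stretch {c : ℕ} (hc : 0 < c) : Tendsto (fun n : ℕ => c * n) atTop atTop :=
    tendsto_id.const_mul_atTop' hc
  have hnum := (factorial_add_isEquivalent (2 * q)).comp_tendsto (stretch four_pos)
  have hden := (factorial_add_isEquivalent (q + 1)).comp_tendsto (stretch three_pos)
  calc (fun p => melonC p q)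
      ~[atTop] fun p : ℕ => ((4 * p)! * ((4 * p : ℕ) : ℝ) ^ (2 * q) /
        (p ! * q ! * ((3 * p)! * ((3 * p : ℕ) : ℝ) ^ (q + 1))) : ℝ) :=
        hnum.div ((IsEquivalent.refl (u := fun p : ℕ => (p ! * q ! : ℝ))).mul hden)
    _ = fun p : ℕ => ((4 * p)! / (p ! * (3 * p)!) : ℝ) *
        (((4 * p : ℕ) : ℝ) ^ (2 * q) / (q ! * ((3 * p : ℕ) : ℝ) ^ (q + 1))) := by
      ext p
      ring
    _ ~[atTop] fun p : ℕ => √(2 / (3 * π * p)) * (256 / 27 : ℝ) ^ p *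
        (((4 * p : ℕ) : ℝ) ^ (2 * q) / (q ! * ((3 * p : ℕ) : ℝ) ^ (q + 1))) :=
      factorial_four_mul_div_isEquivalent.mul IsEquivalent.refl
    _ =ᶠ[atTop] _ := by
      filter_upwards [eventually_gt_atTop 0] with p hp
      have hp' : (0 : ℝ) < p := by exact_mod_cast hp
      have hrpow : (p : ℝ) ^ ((q : ℝ) - 3 / 2) = p ^ q / (p * √p) := by
        rw [rpow_sub hp', rpow_natCast, show (3 / 2 : ℝ) = 1 + 1 / 2 by norm_num,
          rpow_add hp', rpow_one, ← sqrt_eq_rpow]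
      have hsqrt : √(2 / (3 * π * p)) = √(2 / (3 * π)) / √p := by
        rw [← div_div, sqrt_div' _ hp'.le]
      have : (0 : ℝ) < √p := sqrt_pos.mpr hp'
      push_cast
      rw [hrpow, hsqrt, mul_pow, pow_mul (4 : ℝ)]
      norm_num [div_pow]
      field_simp
      ring

theorem melonC_asymptotic_fixed_q (q₀ : ℕ) :
    Tendsto (fun p : ℕ =>
        melonC p q₀ /
          ((1 / 3) * Real.sqrt (2 / (3 * Real.pi)) * (1 / (Nat.factorial q₀ : ℝ)) *
            (16 / 3) ^ q₀ * (p : ℝ) ^ ((q₀ : ℝ) - 3 / 2) * (256 / 27 : ℝ) ^ p))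
      atTop (nhds 1) := by
  refine (isEquivalent_iff_tendsto_one ?_).mp (melonC_isEquivalent q₀)
  filter_upwards [eventually_gt_atTop 0] with p hp
  have : (0 : ℝ) < p := by exact_mod_cast hp
  positivity
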